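/- Let A ⊂ ℝ^{d'} be compact with Hausdorff dimension parameter α ∈ (0, d'] and H_α(A) > 0, let w be a bounded lower semicontinuous weight on A×A that is bounded below by η > 0 on some neighborhood of the diagonal, and s > α. Then there is a constant c_s > 0 such that every N-point configuration minimizing the weighted Riesz s-energy E_s^w on A has minimal pairwise distance at least c_s N^{-1/α}. -/

import Mathlib

/-!
Frostman's lemma is replaced by a covering argument. Since `μH[α] A > 0`, every finite cover of
`A` by closed balls of radii `rᵢ` has `∑ (2 rᵢ) ^ α ≥ h` for some `h > 0`. Given `n` points `z` of
`A` and `r = (c / n) ^ (1 / α)`, the points of `A` lying within `r` of some `z`, or having at least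
`b ^ k` of the `z` within `2 ^ (k + 1) r`, are covered greedily by balls of total cost
`≲ n r ^ α (2 ^ α + 8 ^ α ∑ (2 ^ α / b) ^ k) < h` once `2 ^ α < b`. So some `y ∈ A` escapes, and
summing over dyadic shells gives `∑ |y - z| ^ (-s) ≲ r ^ (-s) ∑ (b / 2 ^ s) ^ k ≲ n ^ (s / α)`
once `b < 2 ^ s`.

For a minimiser, moving `x i` to such a `y` (chosen against the other points) cannot lower the
energy, so by symmetry of `w` the energy of `x i` against the others is at most `W C N ^ (s / α)`,
while it is at least `η / |x i - x j| ^ s` when `|x i - x j| < ρ`.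
-/

open Finset MeasureTheory

noncomputable def stmt9Energy {d' : ℕ} (s : ℝ)
    (w : EuclideanSpace ℝ (Fin d') → EuclideanSpace ℝ (Fin d') → ℝ)
    {N : ℕ} (x : Fin N → EuclideanSpace ℝ (Fin d')) : ℝ :=
  ∑ i, ∑ j ∈ Finset.univ.erase i, w (x i) (x j) / dist (x i) (x j) ^ s

open Metric Filter Topology Function

universe u

/-- `h` bounds from below the `α`-dimensional Hausdorff content of `A` computed with finite covers
by closed balls. -/
def IsBallCoverLowerBound {X : Type u} [PseudoMetricSpace X] (A : Set X) (α h : ℝ) : Prop :=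
  ∀ {ι : Type u} [Fintype ι] (c : ι → X) (r : ι → ℝ), (∀ i, 0 ≤ r i) →
    A ⊆ ⋃ i, closedBall (c i) (r i) → h ≤ ∑ i, (2 * r i) ^ α

lemma ediam_closedBall_le {X : Type*} [PseudoMetricSpace X] (x : X) (r : ℝ) :
    ediam (closedBall x r) ≤ ENNReal.ofReal (2 * r) :=
  ediam_le_of_forall_dist_le fun y hy z hz => by
    rw [mem_closedBall] at hy hz
    linarith [dist_triangle_right y z x]

lemma ediam_closedBall_rpow_le {X : Type*} [PseudoMetricSpace X] (x : X) {r α : ℝ}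
    (hr : 0 ≤ r) (hα : 0 ≤ α) :
    ediam (closedBall x r) ^ α ≤ ENNReal.ofReal ((2 * r) ^ α) := by
  rw [← ENNReal.ofReal_rpow_of_nonneg (by positivity) hα]
  exact ENNReal.rpow_le_rpow (ediam_closedBall_le x r) hα

theorem exists_pos_isBallCoverLowerBound {X : Type u} [MetricSpace X] [MeasurableSpace X]
    [BorelSpace X] {A : Set X} {α : ℝ} (hα : 0 < α) (hA : 0 < μH[α] A) :
    ∃ h : ℝ, 0 < h ∧ IsBallCoverLowerBound A α h := by
  unfold IsBallCoverLowerBound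
  by_contra! hsmall
  choose ι hι c r hr hcov hsum using fun n : ℕ => hsmall (1 / (n + 1)) Nat.one_div_pos_of_nat
  set ε : ℕ → ℝ := fun n => 1 / (n + 1)
  have hε : Tendsto ε atTop (𝓝 0) := tendsto_one_div_add_atTop_nhds_zero_nat
  have hterm_nonneg : ∀ n i, 0 ≤ (2 * r n i) ^ α := fun n i =>
    Real.rpow_nonneg (by linarith [hr n i]) α
  have hdiam : ∀ n i, ediam (closedBall (c n i) (r n i)) ≤ ENNReal.ofReal (ε n ^ α⁻¹) := by
    intro n i
    have hterm : (2 * r n i) ^ α ≤ ε n :=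
      (single_le_sum (fun j _ => hterm_nonneg n j) (mem_univ i)).trans (hsum n).le
    refine (ediam_closedBall_le _ _).trans (ENNReal.ofReal_le_ofReal ?_)
    exact (Real.le_rpow_inv_iff_of_pos (by linarith [hr n i]) (by positivity) hα).2 hterm
  have hsum' : ∀ n, ∑ i, ediam (closedBall (c n i) (r n i)) ^ α ≤ ENNReal.ofReal (ε n) := by
    intro n
    calc ∑ i, ediam (closedBall (c n i) (r n i)) ^ α
        ≤ ∑ i, ENNReal.ofReal ((2 * r n i) ^ α) :=
          sum_le_sum fun i _ => ediam_closedBall_rpow_le _ (hr n i) hα.le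
      _ = ENNReal.ofReal (∑ i, (2 * r n i) ^ α) :=
          (ENNReal.ofReal_sum_of_nonneg fun i _ => hterm_nonneg n i).symm
      _ ≤ ENNReal.ofReal (ε n) := ENNReal.ofReal_le_ofReal (hsum n).le
  have hμ := Measure.hausdorffMeasure_le_liminf_sum α A (l := atTop)
    (fun n => ENNReal.ofReal (ε n ^ α⁻¹))
    (by simpa [Real.zero_rpow (inv_ne_zero hα.ne')] using
      ENNReal.tendsto_ofReal (hε.rpow_const (Or.inr (inv_nonneg.2 hα.le))))
    (fun n i => closedBall (c n i) (r n i)) (Eventually.of_forall hdiam)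
    (Eventually.of_forall hcov)
  have hlim : liminf (fun n => ENNReal.ofReal (ε n)) atTop = 0 := by
    simpa using (ENNReal.tendsto_ofReal hε).liminf_eq
  exact hA.ne' (le_antisymm (hμ.trans ((liminf_le_liminf (Eventually.of_forall hsum')).trans
    hlim.le)) bot_le)

theorem exists_card_mul_le_and_subset_iUnion_closedBall {E : Type*} [PseudoMetricSpace E]
    (P : Finset E) (G : Set E) (t : ℝ) {m : ℕ} (hm : 0 < m)
    (hG : ∀ y ∈ G, m ≤ #{z ∈ P | dist y z < t}) :
    ∃ F : Finset E, m * #F ≤ #P ∧ G ⊆ ⋃ z ∈ F, closedBall z (2 * t) := by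
  classical
  induction P using Finset.strongInduction generalizing G with
  | H P ih =>
  rcases G.eq_empty_or_nonempty with rfl | ⟨y₀, hy₀⟩
  · exact ⟨∅, by simp, Set.empty_subset _⟩
  have hsplit := card_filter_add_card_filter_not (s := P) (fun z => dist y₀ z < t)
  have hnear := hG y₀ hy₀
  set P' := {z ∈ P | ¬dist y₀ z < t}
  have hP' : P' ⊂ P := Finset.ssubset_iff_subset_ne.2 ⟨filter_subset _ _, fun h => by
    rw [h] at hsplit; omega⟩
  -- points within `t` of a point outside `closedBall y₀ (2 * t)` are not within `t` of `y₀`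
  obtain ⟨F, hFcard, hFcov⟩ := ih P' hP' (G \ closedBall y₀ (2 * t)) fun y hy => by
    refine (hG y hy.1).trans (card_le_card fun z hz => ?_)
    simp only [P', mem_filter] at hz ⊢
    refine ⟨⟨hz.1, fun hz₀ => hy.2 ?_⟩, hz.2⟩
    rw [mem_closedBall]
    linarith [dist_triangle y z y₀, dist_comm z y₀]
  refine ⟨insert y₀ F, ?_, ?_⟩
  · calc m * #(insert y₀ F) ≤ m * #F + m := by
          simpa [mul_add] using Nat.mul_le_mul_left m (card_insert_le y₀ F)
      _ ≤ #P := by omega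
  · rw [set_biUnion_insert, ← Set.sdiff_subset_iff]
    exact hFcov

theorem exists_mem_forall_lt_dist_and_card_lt {X : Type u} [PseudoMetricSpace X] {A : Set X}
    {α h : ℝ} (hA : IsBallCoverLowerBound A α h)
    (P : Finset X) {r : ℝ} (hr : 0 ≤ r) (K : Finset ℕ) (t : ℕ → ℝ) (ht : ∀ k, 0 ≤ t k)
    (m : ℕ → ℕ) (hm : ∀ k, 0 < m k)
    (hsmall : #P * (2 * r) ^ α + ∑ k ∈ K, #P / m k * (4 * t k) ^ α < h) :
    ∃ y ∈ A, (∀ z ∈ P, r < dist y z) ∧ ∀ k ∈ K, #{z ∈ P | dist y z < t k} < m k := by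
  by_contra! hcrowded
  choose F hFcard hFcov using fun k => exists_card_mul_le_and_subset_iUnion_closedBall P
    {y | m k ≤ #{z ∈ P | dist y z < t k}} (t k) (hm k) fun _ hy => hy
  have hcontent := hA (ι := P ⊕ Σ k : K, F k) (Sum.elim Subtype.val fun p => p.2)
    (Sum.elim (fun _ => r) fun p => 2 * t p.1) (Sum.rec (fun _ => hr) fun p => by simp [ht])
    (fun y hy => by
      by_cases hfar : ∀ z ∈ P, r < dist y z
      · obtain ⟨k, hk, hyk⟩ := hcrowded y hy hfar
        obtain ⟨z, hz, hyz⟩ := Set.mem_iUnion₂.1 (hFcov k hyk)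
        exact Set.mem_iUnion.2 ⟨Sum.inr ⟨⟨k, hk⟩, ⟨z, hz⟩⟩, hyz⟩
      · push Not at hfar
        obtain ⟨z, hz, hyz⟩ := hfar
        exact Set.mem_iUnion.2 ⟨Sum.inl ⟨z, hz⟩, hyz⟩)
  simp only [Fintype.sum_sum_type, Fintype.sum_sigma, Sum.elim_inl, Sum.elim_inr, sum_const,
    card_univ, Fintype.card_coe, nsmul_eq_mul, ← mul_assoc] at hcontent
  rw [sum_coe_sort K fun k => #(F k) * (2 * 2 * t k) ^ α] at hcontent
  have hF : ∀ k ∈ K, #(F k) * (2 * 2 * t k) ^ α ≤ #P / m k * (4 * t k) ^ α := fun k _ => by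
    rw [show (2 : ℝ) * 2 = 4 by norm_num]
    refine mul_le_mul_of_nonneg_right ?_ (Real.rpow_nonneg (by linarith [ht k]) α)
    rw [le_div_iff₀ (by exact_mod_cast hm k), mul_comm]
    exact_mod_cast hFcard k
  exact hsmall.not_ge (hcontent.trans (add_le_add_right (sum_le_sum hF) _))

lemma rpow_four_mul_two_pow_mul {α r : ℝ} (hr : 0 ≤ r) (k : ℕ) :
    (4 * (2 ^ (k + 1) * r)) ^ α = 8 ^ α * r ^ α * (2 ^ α) ^ k := by
  rw [show 4 * (2 ^ (k + 1) * r) = 2 ^ k * (8 * r) by ring,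
    Real.mul_rpow (by positivity) (by positivity), Real.mul_rpow (by norm_num) hr,
    ← Real.rpow_pow_comm zero_le_two]
  ring

theorem exists_pos_forall_exists_lt_dist_and_card_lt {X : Type u} [PseudoMetricSpace X]
    {A : Set X} {α h b : ℝ} (hh : 0 < h) (hA : IsBallCoverLowerBound A α h) (hb : 2 ^ α < b) :
    ∃ c : ℝ, 0 < c ∧ ∀ (P : Finset X) {r : ℝ}, 0 < r → #P * r ^ α ≤ c → ∀ K : ℕ,
      ∃ y ∈ A, (∀ z ∈ P, r < dist y z) ∧
        ∀ k ≤ K, (#{z ∈ P | dist y z < 2 ^ (k + 1) * r} : ℝ) < b ^ k := by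
  have h2α : 0 < (2 : ℝ) ^ α := by positivity
  have hb0 : 0 < b := h2α.trans hb
  set q := 2 ^ α / b
  have hq0 : 0 ≤ q := by positivity
  have hq1 : q < 1 := (div_lt_one hb0).2 hb
  set L := 2 ^ α + 8 ^ α / (1 - q)
  have hL : 0 < L := by
    have : 0 < 1 - q := by linarith
    positivity
  refine ⟨h / (2 * L), by positivity, fun P r hr hPr K => ?_⟩
  have hterm : ∀ k ∈ range (K + 1), (#P : ℝ) / ⌈b ^ k⌉₊ * (4 * (2 ^ (k + 1) * r)) ^ α ≤
      #P * r ^ α * 8 ^ α * q ^ k := fun k _ => calc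
    (#P : ℝ) / ⌈b ^ k⌉₊ * (4 * (2 ^ (k + 1) * r)) ^ α
        ≤ #P / b ^ k * (4 * (2 ^ (k + 1) * r)) ^ α := by
          gcongr
          exact Nat.le_ceil _
    _ = #P * r ^ α * 8 ^ α * q ^ k := by
          rw [rpow_four_mul_two_pow_mul hr.le, div_pow]
          field_simp
  have hgeom : ∑ k ∈ range (K + 1), q ^ k ≤ 1 / (1 - q) := by
    simpa using geom_sum_Ico_le_of_lt_one (m := 0) (n := K + 1) hq0 hq1
  have hsmall : (#P : ℝ) * (2 * r) ^ α +
      ∑ k ∈ range (K + 1), #P / ⌈b ^ k⌉₊ * (4 * (2 ^ (k + 1) * r)) ^ α < h := calc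
    _ ≤ #P * r ^ α * 2 ^ α + ∑ k ∈ range (K + 1), #P * r ^ α * 8 ^ α * q ^ k := by
        rw [Real.mul_rpow zero_le_two hr.le]
        exact add_le_add (le_of_eq (by ring)) (sum_le_sum hterm)
    _ ≤ #P * r ^ α * L := by
        rw [← mul_sum, mul_assoc _ (8 ^ α), ← mul_add]
        gcongr
        calc 2 ^ α + 8 ^ α * ∑ k ∈ range (K + 1), q ^ k ≤ 2 ^ α + 8 ^ α * (1 / (1 - q)) := by
              gcongr
          _ = L := by rw [mul_one_div]
    _ ≤ h / (2 * L) * L := by gcongr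
    _ < h := by field_simp; linarith
  obtain ⟨y, hyA, hfar, hcount⟩ := exists_mem_forall_lt_dist_and_card_lt hA P hr.le
    (range (K + 1)) (fun k => 2 ^ (k + 1) * r) (fun k => by positivity) (fun k => ⌈b ^ k⌉₊)
    (fun k => Nat.ceil_pos.2 (by positivity)) hsmall
  exact ⟨y, hyA, hfar, fun k hk => Nat.lt_ceil.1 (hcount k (mem_range.2 (by omega)))⟩

lemma exists_dyadic_shell {r d : ℝ} (hr : 0 < r) (hrd : r ≤ d) {K : ℕ}
    (hdK : d < 2 ^ (K + 1) * r) : ∃ k ≤ K, 2 ^ k * r ≤ d ∧ d < 2 ^ (k + 1) * r := by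
  obtain ⟨k, hk, hk'⟩ := exists_nat_pow_near ((one_le_div hr).2 hrd) one_lt_two
  rw [le_div_iff₀ hr] at hk
  rw [div_lt_iff₀ hr] at hk'
  refine ⟨k, ?_, hk, hk'⟩
  have h2k : (2 : ℝ) ^ k < 2 ^ (K + 1) := lt_of_mul_lt_mul_right (hk.trans_lt hdK) hr.le
  exact Nat.lt_succ_iff.1 ((pow_lt_pow_iff_right₀ one_lt_two).1 h2k)

theorem sum_rpow_neg_le_sum_card_mul {ι : Type*} (J : Finset ι) (d : ι → ℝ) {r s : ℝ}
    (hr : 0 < r) (hs : 0 ≤ s) (K : ℕ) (hd : ∀ j ∈ J, r ≤ d j ∧ d j < 2 ^ (K + 1) * r) :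
    ∑ j ∈ J, d j ^ (-s) ≤
      ∑ k ∈ range (K + 1), #{j ∈ J | d j < 2 ^ (k + 1) * r} * (2 ^ k * r) ^ (-s) := by
  have hshell : ∀ j ∈ J, d j ^ (-s) ≤
      ∑ k ∈ range (K + 1), if d j < 2 ^ (k + 1) * r then (2 ^ k * r) ^ (-s) else 0 := by
    intro j hj
    obtain ⟨k, hkK, hkd, hdk⟩ := exists_dyadic_shell hr (hd j hj).1 (hd j hj).2
    refine le_trans ?_ (single_le_sum (fun k _ => ?_) (mem_range.2 (Nat.lt_succ_of_le hkK)))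
    · rw [if_pos hdk]
      exact Real.rpow_le_rpow_of_nonpos (by positivity) hkd (neg_nonpos.2 hs)
    · split_ifs <;> positivity
  refine (sum_le_sum hshell).trans_eq ?_
  rw [sum_comm]
  refine sum_congr rfl fun k _ => ?_
  rw [← sum_filter, sum_const, nsmul_eq_mul]

theorem exists_pos_forall_exists_sum_dist_rpow_neg_le {X : Type u} [MetricSpace X]
    [MeasurableSpace X] [BorelSpace X] {A : Set X} {α s : ℝ} (hα : 0 < α) (hαs : α < s)
    (hA : Bornology.IsBounded A) (hHα : 0 < μH[α] A) :
    ∃ C : ℝ, 0 < C ∧ ∀ n : ℕ, 0 < n → ∀ P : Finset X, #P ≤ n → ↑P ⊆ A →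
      ∃ y ∈ A, y ∉ P ∧ ∑ z ∈ P, dist y z ^ (-s) ≤ C * n ^ (s / α) := by
  obtain ⟨h, hh, hcontent⟩ := exists_pos_isBallCoverLowerBound hα hHα
  obtain ⟨b, hαb, hbs⟩ := exists_between (Real.rpow_lt_rpow_of_exponent_lt one_lt_two hαs)
  obtain ⟨c, hc, hgood⟩ := exists_pos_forall_exists_lt_dist_and_card_lt hh hcontent hαb
  obtain ⟨D, hD⟩ := isBounded_iff.1 hA
  have hq0 : 0 ≤ b / 2 ^ s :=
    div_nonneg ((Real.rpow_pos_of_pos two_pos α).trans hαb).le (by positivity)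
  have hq1 : b / 2 ^ s < 1 := (div_lt_one (by positivity)).2 hbs
  have hq : 0 < 1 - b / 2 ^ s := by linarith
  refine ⟨1 / (c ^ (s / α) * (1 - b / 2 ^ s)), by positivity, fun n hn P hPn hPA => ?_⟩
  have hn' : (0 : ℝ) < n := by exact_mod_cast hn
  set r := (c / n) ^ α⁻¹
  have hr : 0 < r := by positivity
  have hrα : n * r ^ α = c := by
    rw [Real.rpow_inv_rpow (by positivity) hα.ne']
    field_simp
  obtain ⟨K, hK⟩ := pow_unbounded_of_one_lt (D / r) one_lt_two
  obtain ⟨y, hyA, hfar, hcount⟩ := hgood P hr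
    (hrα ▸ mul_le_mul_of_nonneg_right (by exact_mod_cast hPn) (by positivity)) K
  refine ⟨y, hyA, fun hy => by simpa [hr.not_gt] using hfar y hy, ?_⟩
  have hDK : D < 2 ^ (K + 1) * r := calc
    D < 2 ^ K * r := (div_lt_iff₀ hr).1 hK
    _ ≤ 2 ^ (K + 1) * r := by gcongr <;> norm_num
  have hdyadic := sum_rpow_neg_le_sum_card_mul P (dist y) hr (hα.trans hαs).le K fun z hz =>
    ⟨(hfar z hz).le, (hD hyA (hPA hz)).trans_lt hDK⟩
  calc ∑ z ∈ P, dist y z ^ (-s)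
      ≤ ∑ k ∈ range (K + 1), b ^ k * (2 ^ k * r) ^ (-s) := by
        refine hdyadic.trans (sum_le_sum fun k hk => ?_)
        gcongr
        exact (hcount k (by simpa [Nat.lt_succ_iff] using hk)).le
    _ = r ^ (-s) * ∑ k ∈ range (K + 1), (b / 2 ^ s) ^ k := by
        rw [mul_sum]
        refine sum_congr rfl fun k _ => ?_
        rw [Real.mul_rpow (by positivity) hr.le, ← Real.rpow_pow_comm zero_le_two,
          Real.rpow_neg zero_le_two, div_pow, inv_pow]
        ring
    _ ≤ r ^ (-s) * (1 / (1 - b / 2 ^ s)) := by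
        gcongr
        simpa using geom_sum_Ico_le_of_lt_one (m := 0) (n := K + 1) hq0 hq1
    _ = 1 / (c ^ (s / α) * (1 - b / 2 ^ s)) * n ^ (s / α) := by
        rw [← Real.rpow_mul (by positivity), show α⁻¹ * -s = -(s / α) by ring,
          Real.rpow_neg (by positivity), Real.div_rpow hc.le hn'.le]
        field_simp

lemma Function.Injective.update_of_forall_ne {α β : Type*} [DecidableEq α] {x : α → β}
    (hx : Injective x) {i : α} {y : β} (hy : ∀ j ≠ i, x j ≠ y) : Injective (update x i y) := by
  intro a b hab
  by_cases ha : a = i <;> by_cases hb : b = i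
  · rw [ha, hb]
  · simp only [ha, update_self, update_of_ne hb] at hab
    exact absurd hab.symm (hy b hb)
  · simp only [hb, update_self, update_of_ne ha] at hab
    exact absurd hab (hy a ha)
  · simp only [update_of_ne ha, update_of_ne hb] at hab
    exact hx hab

noncomputable def pointEnergy {E : Type*} [Dist E] (s : ℝ) (w : E → E → ℝ) {N : ℕ}
    (x : Fin N → E) (i : Fin N) : ℝ :=
  ∑ j ∈ univ.erase i, w (x i) (x j) / dist (x i) (x j) ^ s

section PointEnergy

variable {E : Type*} [PseudoMetricSpace E] {s : ℝ} {w : E → E → ℝ} {N : ℕ}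

lemma div_rpow_le_pointEnergy (hw : ∀ a b, 0 ≤ w a b) (x : Fin N → E) {i j : Fin N}
    (hij : i ≠ j) {η : ℝ} (hη : η ≤ w (x i) (x j)) :
    η / dist (x i) (x j) ^ s ≤ pointEnergy s w x i :=
  (div_le_div_of_nonneg_right hη (by positivity)).trans <|
    single_le_sum (f := fun k => w (x i) (x k) / dist (x i) (x k) ^ s)
      (fun k _ => div_nonneg (hw _ _) (by positivity)) (mem_erase.2 ⟨hij.symm, mem_univ j⟩)

lemma pointEnergy_update_le_mul_sum (x : Fin N → E) (i : Fin N) (y : E) {W : ℝ}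
    (hW : ∀ k ≠ i, w y (x k) ≤ W) :
    pointEnergy s w (update x i y) i ≤ W * ∑ k ∈ univ.erase i, dist y (x k) ^ (-s) := by
  rw [mul_sum]
  refine sum_le_sum fun k hk => ?_
  rw [update_self, update_of_ne (ne_of_mem_erase hk), Real.rpow_neg dist_nonneg, ← div_eq_mul_inv]
  gcongr
  exact hW k (ne_of_mem_erase hk)

end PointEnergy

section Energy

variable {d' : ℕ} {s : ℝ} {w : EuclideanSpace ℝ (Fin d') → EuclideanSpace ℝ (Fin d') → ℝ}
  {N : ℕ}

lemma stmt9Energy_eq_two_mul_pointEnergy_add (hw : ∀ a b, w a b = w b a)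
    (x : Fin N → EuclideanSpace ℝ (Fin d')) (i : Fin N) :
    stmt9Energy s w x = 2 * pointEnergy s w x i +
      ∑ a ∈ univ.erase i, ∑ b ∈ (univ.erase a).erase i, w (x a) (x b) / dist (x a) (x b) ^ s := by
  have hsymm : ∑ a ∈ univ.erase i, w (x a) (x i) / dist (x a) (x i) ^ s = pointEnergy s w x i :=
    sum_congr rfl fun a _ => by rw [hw, dist_comm]
  have hrest : ∑ a ∈ univ.erase i, ∑ b ∈ univ.erase a, w (x a) (x b) / dist (x a) (x b) ^ s =
      ∑ a ∈ univ.erase i, w (x a) (x i) / dist (x a) (x i) ^ s +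
        ∑ a ∈ univ.erase i, ∑ b ∈ (univ.erase a).erase i, w (x a) (x b) / dist (x a) (x b) ^ s := by
    rw [← sum_add_distrib]
    exact sum_congr rfl fun a ha =>
      (add_sum_erase _ _ (mem_erase.2 ⟨(ne_of_mem_erase ha).symm, mem_univ i⟩)).symm
  rw [stmt9Energy, ← add_sum_erase univ _ (mem_univ i), hrest, hsymm, pointEnergy]
  ring

lemma pointEnergy_le_of_stmt9Energy_le_update (hw : ∀ a b, w a b = w b a)
    (x : Fin N → EuclideanSpace ℝ (Fin d')) (i : Fin N) (y : EuclideanSpace ℝ (Fin d'))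
    (h : stmt9Energy s w x ≤ stmt9Energy s w (update x i y)) :
    pointEnergy s w x i ≤ pointEnergy s w (update x i y) i := by
  rw [stmt9Energy_eq_two_mul_pointEnergy_add hw x i,
    stmt9Energy_eq_two_mul_pointEnergy_add hw (update x i y) i] at h
  have hrest : ∑ a ∈ univ.erase i, ∑ b ∈ (univ.erase a).erase i,
      w (update x i y a) (update x i y b) / dist (update x i y a) (update x i y b) ^ s =
      ∑ a ∈ univ.erase i, ∑ b ∈ (univ.erase a).erase i, w (x a) (x b) / dist (x a) (x b) ^ s :=
    sum_congr rfl fun a ha => sum_congr rfl fun b hb => by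
      rw [update_of_ne (ne_of_mem_erase ha), update_of_ne (ne_of_mem_erase hb)]
  linarith

end Energy

lemma le_of_div_rpow_le_mul_rpow {a B δ s α N : ℝ} (ha : 0 < a) (hB : 0 < B) (hδ : 0 < δ)
    (hs : 0 < s) (hN : 0 < N) (h : a / δ ^ s ≤ B * N ^ (s / α)) :
    (a / B) ^ s⁻¹ * N ^ (-(1 / α)) ≤ δ := by
  rw [← Real.rpow_le_rpow_iff (by positivity) hδ.le hs,
    Real.mul_rpow (by positivity) (by positivity), Real.rpow_inv_rpow (by positivity) hs.ne', ← Real.rpow_mul hN.le,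
    show -(1 / α) * s = -(s / α) by ring, Real.rpow_neg hN.le]
  rw [div_le_iff₀ (by positivity)] at h
  rw [div_mul_eq_mul_div, div_le_iff₀ hB, ← div_eq_mul_inv, div_le_iff₀ (by positivity)]
  linarith

theorem stmt_9_general (d' : ℕ) (α s : ℝ) (hα0 : 0 < α) (hs : α < s)
    (A : Set (EuclideanSpace ℝ (Fin d'))) (hA : IsCompact A)
    (hHα : 0 < μH[α] A)
    (w : EuclideanSpace ℝ (Fin d') → EuclideanSpace ℝ (Fin d') → ℝ)
    (hw0 : ∀ x y, 0 ≤ w x y) (hwsym : ∀ x y, w x y = w y x)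
    (hwbdd : ∃ W : ℝ, ∀ x ∈ A, ∀ y ∈ A, w x y ≤ W)
    (η ρ : ℝ) (hη : 0 < η) (hρ : 0 < ρ)
    (hdiag : ∀ x ∈ A, ∀ y ∈ A, dist x y < ρ → η ≤ w x y) :
    ∃ c : ℝ, 0 < c ∧ ∀ (N : ℕ), 2 ≤ N →
      ∀ x : Fin N → EuclideanSpace ℝ (Fin d'),
        Function.Injective x → (∀ i, x i ∈ A) →
        (∀ y : Fin N → EuclideanSpace ℝ (Fin d'),
          Function.Injective y → (∀ i, y i ∈ A) → stmt9Energy s w x ≤ stmt9Energy s w y) →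
        ∀ i j, i ≠ j → c * (N : ℝ) ^ (-(1 / α)) ≤ dist (x i) (x j) := by
  obtain ⟨W, hW0, hW⟩ : ∃ W > 0, ∀ x ∈ A, ∀ y ∈ A, w x y ≤ W :=
    let ⟨W, hW⟩ := hwbdd
    ⟨max W 1, by positivity, fun x hx y hy => (hW x hx y hy).trans (le_max_left _ _)⟩
  obtain ⟨C, hC, hselect⟩ :=
    exists_pos_forall_exists_sum_dist_rpow_neg_le hα0 hs hA.isBounded hHα
  refine ⟨min ρ ((η / (W * C)) ^ s⁻¹), by positivity, fun N hN x hx hxA hmin i j hij => ?_⟩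
  have hN1 : (1 : ℝ) ≤ N := by exact_mod_cast (by omega : 1 ≤ N)
  rcases le_or_gt ρ (dist (x i) (x j)) with hfar | hnear
  · refine (mul_le_of_le_one_right (by positivity) ?_).trans ((min_le_left _ _).trans hfar)
    exact Real.rpow_le_one_of_one_le_of_nonpos hN1 (by simp [hα0.le])
  obtain ⟨y, hyA, hyx, hy⟩ := hselect N (by omega) ((univ.erase i).image x)
    (card_image_le.trans (by simp)) (by simpa [Set.subset_def] using fun k _ => hxA k)
  have hyx' : ∀ k ≠ i, x k ≠ y := fun k hk hxk =>
    hyx (mem_image.2 ⟨k, mem_erase.2 ⟨hk, mem_univ k⟩, hxk⟩)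
  have hmove := pointEnergy_le_of_stmt9Energy_le_update hwsym x i y <|
    hmin _ (hx.update_of_forall_ne hyx')
      ((forall_update_iff x (p := fun _ z => z ∈ A)).2 ⟨hyA, fun k _ => hxA k⟩)
  have hlower := div_rpow_le_pointEnergy (s := s) hw0 x hij (hdiag _ (hxA i) _ (hxA j) hnear)
  have hupper : pointEnergy s w (update x i y) i ≤ W * C * N ^ (s / α) := by
    refine (pointEnergy_update_le_mul_sum x i y fun k _ => hW y hyA (x k) (hxA k)).trans ?_
    rw [mul_assoc, ← sum_image (f := fun z => dist y z ^ (-s)) hx.injOn]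
    gcongr
  calc min ρ ((η / (W * C)) ^ s⁻¹) * (N : ℝ) ^ (-(1 / α))
      ≤ (η / (W * C)) ^ s⁻¹ * (N : ℝ) ^ (-(1 / α)) := by gcongr; exact min_le_right _ _
    _ ≤ dist (x i) (x j) :=
        le_of_div_rpow_le_mul_rpow hη (by positivity) (dist_pos.2 (hx.ne hij)) (hα0.trans hs)
          (by positivity) (hlower.trans (hmove.trans hupper))

theorem stmt_9 (d' : ℕ) (α s : ℝ) (hα0 : 0 < α) (hαd : α ≤ d') (hs : α < s)
    (A : Set (EuclideanSpace ℝ (Fin d'))) (hA : IsCompact A)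
    (hHα : 0 < μH[α] A)
    (w : EuclideanSpace ℝ (Fin d') → EuclideanSpace ℝ (Fin d') → ℝ)
    (hw0 : ∀ x y, 0 ≤ w x y) (hwsym : ∀ x y, w x y = w y x)
    (hwbdd : ∃ W : ℝ, ∀ x ∈ A, ∀ y ∈ A, w x y ≤ W)
    (hlsc : LowerSemicontinuousOn (fun p : EuclideanSpace ℝ (Fin d') × EuclideanSpace ℝ (Fin d') =>
      w p.1 p.2) (A ×ˢ A))
    (η ρ : ℝ) (hη : 0 < η) (hρ : 0 < ρ)
    (hdiag : ∀ x ∈ A, ∀ y ∈ A, dist x y < ρ → η ≤ w x y) :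
    ∃ c : ℝ, 0 < c ∧ ∀ (N : ℕ), 2 ≤ N →
      ∀ x : Fin N → EuclideanSpace ℝ (Fin d'),
        Function.Injective x → (∀ i, x i ∈ A) →
        (∀ y : Fin N → EuclideanSpace ℝ (Fin d'),
          Function.Injective y → (∀ i, y i ∈ A) → stmt9Energy s w x ≤ stmt9Energy s w y) →
        ∀ i j, i ≠ j → c * (N : ℝ) ^ (-(1 / α)) ≤ dist (x i) (x j) :=
  stmt_9_general d' α s hα0 hs A hA hHα w hw0 hwsym hwbdd η ρ hη hρ hdiag
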